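/- Let k, m, r, t be integers with 1 ≤ m < k, r ≤ ⌈k/m⌉ and 1 ≤ t ≤ n. If Z is an ℓ₁-connected set of cells of the t-tessellation T(n,t) such that every cell of Z is m-good and Z contains a seed, then in the r-majority bootstrap percolation process on L(n,k), eventually every vertex of every cell of Z becomes active. -/

import Mathlib

open Finset Filter

namespace Maj

variable {V : Type*}

/-- The set of neighbours of `v` under the adjacency relation `Adj`. -/
def nbrSet (Adj : V → V → Prop) (v : V) : Set V := {u | Adj v u}

/-- One round of the `r`-majority bootstrap percolation process: an inactive vertex `v`
becomes active if at least `⌈(deg v + r)/2⌉` of its neighbours are active, i.e. if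
`deg v + r ≤ 2 * #(active neighbours)`. -/
def majStep (Adj : V → V → Prop) (r : ℤ) (A : Set V) : Set V :=
  A ∪ {v | ((nbrSet Adj v).ncard : ℤ) + r ≤ 2 * ((nbrSet Adj v ∩ A).ncard : ℤ)}

/-- The final (stationary) state of `r`-majority bootstrap percolation started from `A`. -/
def majFinal (Adj : V → V → Prop) (r : ℤ) (A : Set V) : Set V :=
  ⋃ s : ℕ, (majStep Adj r)^[s] A

/-- One round of ordinary bootstrap percolation with activation threshold `j`. -/
def bootStep (Adj : V → V → Prop) (j : ℕ) (A : Set V) : Set V :=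
  A ∪ {v | j ≤ (nbrSet Adj v ∩ A).ncard}

/-- The final state of ordinary bootstrap percolation `B_j(G;A)`. -/
def bootFinal (Adj : V → V → Prop) (j : ℕ) (A : Set V) : Set V :=
  ⋃ s : ℕ, (bootStep Adj j)^[s] A

/-- The vertex set of the `j`-core of the subgraph induced on `U`: the largest `W ⊆ U`
such that every vertex of `W` has at least `j` neighbours in `W`. -/
def coreSet (Adj : V → V → Prop) (j : ℤ) (U : Set V) : Set V :=
  ⋃₀ {W : Set V | W ⊆ U ∧ ∀ v ∈ W, j ≤ ((nbrSet Adj v ∩ W).ncard : ℤ)}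

open scoped Classical in
/-- The probability that the random initial set (each vertex initially active with
probability `p`, independently) satisfies the event `E`. -/
noncomputable def initProb (V : Type*) [Fintype V] (p : ℝ) (E : Set V → Prop) : ℝ :=
  ∑ A : Finset V, if E ↑A then p ^ A.card * (1 - p) ^ (Fintype.card V - A.card) else 0

/-- The toroidal grid `[n]²`. -/
abbrev Torus (n : ℕ) := ZMod n × ZMod n

/-- Adjacency in the graph `L(n,k)`: `v` is joined to `v + w` for
`w ∈ {-k,…,k} × {-1,1}`. -/
def LAdj (n k : ℕ) (u v : Torus n) : Prop :=
  ∃ a b : ℤ, a.natAbs ≤ k ∧ (b = 1 ∨ b = -1) ∧ v = u + ((a : ZMod n), (b : ZMod n))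

/-- `initProb` on the torus `[n]²` (defined as `0` in the degenerate case `n = 0`). -/
noncomputable def torusProb (n : ℕ) (p : ℝ) (E : Set (Torus n) → Prop) : ℝ :=
  if h : n = 0 then 0 else
    haveI : NeZero n := ⟨h⟩
    initProb (Torus n) p E

/-- A perfect matching of the vertex set, as a fixed-point-free involution. -/
def IsPerfectMatching (n : ℕ) (f : Torus n → Torus n) : Prop :=
  Function.Involutive f ∧ ∀ v, f v ≠ v

/-- A `k`-admissible `r`-tuple of perfect matchings of `[n]²`: the matchings are pairwise
disjoint and the union with `L(n,k)` has no multiple edges. -/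
def Admissible (n k : ℕ) {r : ℕ} (M : Fin r → Torus n → Torus n) : Prop :=
  (∀ i, IsPerfectMatching n (M i)) ∧
  (∀ i j, i ≠ j → ∀ v, M i v ≠ M j v) ∧
  (∀ i v, ¬ LAdj n k v (M i v))

/-- Adjacency in `L*(n,k,r) = M₁ ∪ ⋯ ∪ M_r ∪ L(n,k)`. -/
def LStarAdj (n k : ℕ) {r : ℕ} (M : Fin r → Torus n → Torus n) (u v : Torus n) : Prop :=
  LAdj n k u v ∨ ∃ i, M i u = v

open scoped Classical in
/-- The probability that `M_r(L*(n,k,r); p)` disseminates, where the `r` perfect matchings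
are chosen uniformly at random among `k`-admissible `r`-tuples and each vertex is
initially active with probability `p`, independently. -/
noncomputable def starDissemProb (n k r : ℕ) (p : ℝ) : ℝ :=
  if h : n = 0 then 0 else
    haveI : NeZero n := ⟨h⟩
    (∑ M ∈ Finset.univ.filter (fun M : Fin r → Torus n → Torus n => Admissible n k M),
        initProb (Torus n) p (fun A => majFinal (LStarAdj n k M) (r : ℤ) A = Set.univ)) /
      ((Finset.univ.filter (fun M : Fin r → Torus n → Torus n => Admissible n k M)).card : ℝ)

/-- The probability that a uniformly random `k`-admissible `r`-tuple of perfect matchings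
of `[n]²` satisfies the event `E`. -/
noncomputable def admProb (n k r : ℕ) (E : (Fin r → Torus n → Torus n) → Prop) : ℝ :=
  (Nat.card {M : Fin r → Torus n → Torus n // Admissible n k M ∧ E M} : ℝ) /
    (Nat.card {M : Fin r → Torus n → Torus n // Admissible n k M} : ℝ)

/-- `stepsLe Adj d u v`: `v` is reachable from `u` in at most `d` steps of `Adj`. -/
def stepsLe (Adj : V → V → Prop) : ℕ → V → V → Prop
  | 0, u, v => u = v
  | d + 1, u, v => stepsLe Adj d u v ∨ ∃ w, stepsLe Adj d u w ∧ Adj w v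

/-- Graph distance with respect to the relation `Adj`. -/
noncomputable def relDist (Adj : V → V → Prop) (u v : V) : ℕ :=
  sInf {d | stepsLe Adj d u v}

/-- The diameter of a set `B` : the maximal `Adj`-graph distance between two of its points. -/
noncomputable def setDiam (Adj : V → V → Prop) (B : Set V) : ℕ :=
  sSup {d | ∃ u ∈ B, ∃ v ∈ B, relDist Adj u v = d}

/-- `U` induces a connected subgraph with respect to `Adj`. -/
def ConnIn (Adj : V → V → Prop) (U : Set V) : Prop :=
  ∀ u ∈ U, ∀ v ∈ U, Relation.ReflTransGen (fun x y => x ∈ U ∧ y ∈ U ∧ Adj x y) u v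

/-- The connected component of `x` inside `Z` (with respect to `Adj`). -/
def compOf (Adj : V → V → Prop) (Z : Set V) (x : V) : Set V :=
  {y | y ∈ Z ∧ Relation.ReflTransGen (fun a b => a ∈ Z ∧ b ∈ Z ∧ Adj a b) x y}

/-- `B` is a connected component of the subgraph induced on `Z`. -/
def IsComponentOf (Adj : V → V → Prop) (Z B : Set V) : Prop :=
  ∃ x ∈ Z, B = compOf Adj Z x

/-- Adjacency in the toroidal square lattice `L₁(n)`. -/
def l1Adj (n : ℕ) (u v : Torus n) : Prop :=
  (u.1 = v.1 ∧ (v.2 = u.2 + 1 ∨ v.2 = u.2 - 1)) ∨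
    (u.2 = v.2 ∧ (v.1 = u.1 + 1 ∨ v.1 = u.1 - 1))

/-- Adjacency in the toroidal lattice with diagonals `L∞(n)`. -/
def lInfAdj (n : ℕ) (u v : Torus n) : Prop :=
  u ≠ v ∧ (v.1 = u.1 ∨ v.1 = u.1 + 1 ∨ v.1 = u.1 - 1) ∧
    (v.2 = u.2 ∨ v.2 = u.2 + 1 ∨ v.2 = u.2 - 1)

/-- Ceiling division: `cdiv k m = ⌈k/m⌉`. -/
def cdiv (k m : ℕ) : ℕ := (k + m - 1) / m

/-- The sequence `x_i` defining the set `S^k_m(a,b)`. -/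
def xseq (k m a b i : ℕ) : ℕ :=
  if m ≤ i then b + (m + a + 1 - i) * k
  else b + (a + 1) * k + cdiv k m * ∑ j ∈ Finset.Ico i m, j

/-- The set `S^k_m(a,b) ⊆ ℤ²`: the union over `|i| ≤ m+a+1` of `[-x_i, x_i] × {i}`. -/
def Scloud (k m a b : ℕ) : Set (ℤ × ℤ) :=
  {p | p.2.natAbs ≤ m + a + 1 ∧ p.1.natAbs ≤ xseq k m a b p.2.natAbs}

/-- Canonical projection `ℤ² → [n]²`. -/
def proj (n : ℕ) (p : ℤ × ℤ) : Torus n := ((p.1 : ZMod n), (p.2 : ZMod n))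

/-- A vertex `v` is `m`-good (with respect to the active set `A`) if each of the four sets
`v ± {1,…,k} × {1}`, `v ± {1,…,k} × {-1}` contains at least `2⌈k/m⌉` active vertices. -/
def MGood (n k m : ℕ) (A : Set (Torus n)) (v : Torus n) : Prop :=
  ∀ sx sy : ℤ, (sx = 1 ∨ sx = -1) → (sy = 1 ∨ sy = -1) →
    2 * cdiv k m ≤
      {u | u ∈ A ∧ ∃ a : ℤ, 1 ≤ a ∧ a ≤ (k : ℤ) ∧
        u = v + (((sx * a : ℤ) : ZMod n), ((sy : ℤ) : ZMod n))}.ncard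

/-- Endpoints `a_i` of the `t`-tessellation: `a_i = i*t` for `i < ⌊n/t⌋` and `a_{⌊n/t⌋} = n`. -/
def cellEnd (n t i : ℕ) : ℕ := if i = n / t then n else i * t

/-- Cells of the `t`-tessellation `T(n,t)`, identified with `[⌊n/t⌋]²`. -/
abbrev Cell (n t : ℕ) := Torus (n / t)

/-- The set of vertices of `[n]²` in the cell `c = (i,j)` of the `t`-tessellation:
`[a_i+1, a_{i+1}] × [a_j+1, a_{j+1}]`. -/
def cellSet (n t : ℕ) (c : Cell n t) : Set (Torus n) :=
  {v | ∃ x y : ℕ,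
    c.1.val * t + 1 ≤ x ∧ x ≤ cellEnd n t (c.1.val + 1) ∧
    c.2.val * t + 1 ≤ y ∧ y ≤ cellEnd n t (c.2.val + 1) ∧
    v = ((x : ZMod n), (y : ZMod n))}

/-- A cell is `m`-good if every vertex inside it or within `ℓ₁`-distance `32mk²` of it is
`m`-good or active. -/
def CellGood (n t k m : ℕ) (A : Set (Torus n)) (c : Cell n t) : Prop :=
  ∀ w : Torus n, (∃ v ∈ cellSet n t c, stepsLe (l1Adj n) (32 * m * k ^ 2) v w) →
    (MGood n k m A w ∨ w ∈ A)

/-- A cell is a seed if it contains an active translate of `S^k_m(0,0)`. -/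
def IsSeed (n t k m : ℕ) (A : Set (Torus n)) (c : Cell n t) : Prop :=
  ∃ w : Torus n, ∀ p ∈ Scloud k m 0 0,
    w + proj n p ∈ A ∧ w + proj n p ∈ cellSet n t c

/-- `Z ⊆ [N]²` is `ε`-ubiquitous (with `A = 10⁸`). -/
def Ubiquitous (N : ℕ) (ε : ℝ) (Z : Set (Torus N)) : Prop :=
  ConnIn (l1Adj N) Z ∧
  (1 - 10 ^ 8 * ε) * (N : ℝ) ^ 2 ≤ (Z.ncard : ℝ) ∧
  ∀ (j : ℕ) (B : Fin j → Set (Torus N)), 0 < j →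
    (∀ i, (B i).Nonempty ∧ B i ⊆ Zᶜ ∧ ConnIn (lInfAdj N) (B i)) →
    Pairwise (Function.onFun Disjoint B) →
    ∃ i : Fin j, (setDiam (lInfAdj N) (B i) : ℝ) ≤
      10 ^ 8 / Real.log (1 / ε) * Real.log ((N : ℝ) ^ 2 / (j : ℝ))

/-- A `2`-dependent site-percolation model on `[N]²`: the state of each cell `C` is
independent of the joint state of all cells at `ℓ₁`-distance at least `3` from `C`. -/
def TwoDependent (N : ℕ) (μ : PMF (Torus N → Bool)) : Prop :=
  ∀ (C : Torus N) (E : Set (Torus N → Bool)),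
    (∀ ω ω' : Torus N → Bool,
      (∀ C' : Torus N, ¬ stepsLe (l1Adj N) 2 C C' → ω C' = ω' C') → (ω ∈ E ↔ ω' ∈ E)) →
    ∀ b : Bool,
      μ.toOuterMeasure {ω | ω C = b ∧ ω ∈ E} =
        μ.toOuterMeasure {ω | ω C = b} * μ.toOuterMeasure E

/-- `B` is a largest `ℓ₁`-component of `Z`. -/
def IsLargestL1Component (N : ℕ) (Z B : Set (Torus N)) : Prop :=
  IsComponentOf (l1Adj N) Z B ∧
    ∀ B' : Set (Torus N), IsComponentOf (l1Adj N) Z B' → B'.ncard ≤ B.ncard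

/-- Expectation of a real random variable under a `PMF`. -/
noncomputable def pmfExp {α : Type*} (μ : PMF α) (f : α → ℝ) : ℝ :=
  ∑' a, (μ a).toReal * f a

/-- `N_d`: the number of cells belonging to `ℓ∞`-components of the complement of `G₀`
of `ℓ∞`-diameter exactly `d`. -/
noncomputable def NdCount (N : ℕ) (G₀ : Set (Torus N)) (d : ℕ) : ℕ :=
  {C : Torus N | ∃ B : Set (Torus N),
    IsComponentOf (lInfAdj N) G₀ᶜ B ∧ C ∈ B ∧ setDiam (lInfAdj N) B = d}.ncard

/-- `N'_d`: the number of cells belonging to `ℓ∞`-components of the complement of `G₀`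
of `ℓ∞`-diameter at least `d`. -/
noncomputable def NdGeCount (N : ℕ) (G₀ : Set (Torus N)) (d : ℕ) : ℕ :=
  {C : Torus N | ∃ B : Set (Torus N),
    IsComponentOf (lInfAdj N) G₀ᶜ B ∧ C ∈ B ∧ d ≤ setDiam (lInfAdj N) B}.ncard

/-- A collection of sets of cells `B₁,…,B_s` is stable with respect to the tuple `M` of
perfect matchings. -/
def StableColl (n t : ℕ) {r s : ℕ} (M : Fin r → Torus n → Torus n)
    (B : Fin s → Set (Cell n t)) : Prop :=
  ∀ j : Fin s, ∃ v : Fin 4 → Torus n, Function.Injective v ∧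
    ∀ l : Fin 4, (∃ c ∈ B j, v l ∈ cellSet n t c) ∧
      ∃ i : Fin r, ∃ j' : Fin s, ∃ c ∈ B j', M i (v l) ∈ cellSet n t c

/-- Adjacency in the `m`-dimensional grid `[n]^m` (no wrap-around). -/
def gridAdj (n m : ℕ) (u v : Fin m → Fin n) : Prop :=
  ∃ i : Fin m, ((u i : ℕ) + 1 = (v i : ℕ) ∨ (v i : ℕ) + 1 = (u i : ℕ)) ∧
    ∀ j : Fin m, j ≠ i → u j = v j

end Maj

open Maj

/-!
A translate of `S^k_m(0,0)` that is active can be moved one step in any lattice direction through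
good vertices: it widens row by row into `S^k_m(0, x₀ + 1 + k)` and then grows a new top and
bottom row into `S^k_m(1, x₀ + 1)`, which contains the four unit translates of `S^k_m(0,0)`.
In each growth step a good boundary vertex sees, among its `4k + 2` neighbours, the active parts
of the two adjacent rows of the cloud and `2⌈k/m⌉` active vertices granted by goodness; this beats
the threshold `2k + 1 + r/2` because consecutive drops `x_i - x_{i+1}` of the row widths grow by
at most `⌈k/m⌉`. The cells of `Z` form an `ℓ₁`-connected region of `[n]²` whose vertices all have
good `32mk²`-neighbourhoods, so the cloud of the seed travels to every vertex of that region.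
-/

namespace Maj

section MajorityProcess

variable {V : Type*} (Adj : V → V → Prop) (r : ℤ)

theorem subset_majStep (A : Set V) : A ⊆ majStep Adj r A :=
  Set.subset_union_left

theorem subset_majFinal (A : Set V) : A ⊆ majFinal Adj r A :=
  Set.subset_iUnion (fun s => (majStep Adj r)^[s] A) 0

theorem monotone_iterate_majStep (A : Set V) : Monotone fun s => (majStep Adj r)^[s] A :=
  monotone_nat_of_le_succ fun s => by
    rw [Function.iterate_succ_apply']
    exact subset_majStep Adj r _

variable [Finite V]

theorem exists_majFinal_eq_iterate (A : Set V) :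
    ∃ s, majFinal Adj r A = (majStep Adj r)^[s] A := by
  obtain ⟨s, hs⟩ :=
    WellFoundedGT.monotone_chain_condition ⟨_, monotone_iterate_majStep Adj r A⟩
  refine ⟨s, (Set.iUnion_subset fun u => ?_).antisymm
    (Set.subset_iUnion (fun u => (majStep Adj r)^[u] A) s)⟩
  rcases le_total s u with h | h
  · exact (hs u h).ge
  · exact monotone_iterate_majStep Adj r A h

theorem majStep_majFinal (A : Set V) : majStep Adj r (majFinal Adj r A) = majFinal Adj r A := by
  obtain ⟨s, hs⟩ := exists_majFinal_eq_iterate Adj r A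
  refine (subset_majStep Adj r _).antisymm' ?_
  calc majStep Adj r (majFinal Adj r A) = (majStep Adj r)^[s + 1] A := by
        rw [hs, Function.iterate_succ_apply']
    _ ⊆ majFinal Adj r A := Set.subset_iUnion (fun u => (majStep Adj r)^[u] A) (s + 1)

theorem mem_majFinal_of_le_ncard {A S : Set V} {v : V} (hS : S ⊆ nbrSet Adj v ∩ majFinal Adj r A)
    (hv : ((nbrSet Adj v).ncard : ℤ) + r ≤ 2 * S.ncard) : v ∈ majFinal Adj r A := by
  rw [← majStep_majFinal]
  have := Set.ncard_le_ncard hS (Set.toFinite _)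
  refine Or.inr ?_
  rw [Set.mem_ofPred]
  omega

end MajorityProcess

theorem ConnIn.biUnion {V ι : Type*} {Adj : V → V → Prop} {R : ι → ι → Prop} {Z : Set ι}
    {S : ι → Set V} (hZ : ConnIn R Z) (hS : ∀ i ∈ Z, ConnIn Adj (S i))
    (hbridge : ∀ i j, R i j → ∃ u ∈ S i, ∃ v ∈ S j, Adj u v) :
    ConnIn Adj (⋃ i ∈ Z, S i) := by
  have lift : ∀ l ∈ Z, ∀ x ∈ S l, ∀ y ∈ S l, Relation.ReflTransGen
      (fun a b => a ∈ ⋃ i ∈ Z, S i ∧ b ∈ ⋃ i ∈ Z, S i ∧ Adj a b) x y :=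
    fun l hl x hx y hy => Relation.ReflTransGen.mono
      (fun a b h => ⟨Set.mem_biUnion hl h.1, Set.mem_biUnion hl h.2.1, h.2.2⟩) x y
      (hS l hl x hx y hy)
  intro u hu v hv
  obtain ⟨i, hi, hui⟩ := Set.mem_iUnion₂.1 hu
  obtain ⟨j, hj, hvj⟩ := Set.mem_iUnion₂.1 hv
  induction hZ i hi j hj generalizing v with
  | refl => exact lift i hi u hui v hvj
  | tail _ hl ih =>
    obtain ⟨hl₁, hl₂, hR⟩ := hl
    obtain ⟨x, hx, y, hy, hxy⟩ := hbridge _ _ hR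
    exact ((ih x (Set.mem_biUnion hl₁ hx) hl₁ hx).tail
      ⟨Set.mem_biUnion hl₁ hx, Set.mem_biUnion hl₂ hy, hxy⟩).trans (lift _ hl₂ y hy v hvj)

theorem reflTransGen_of_chain {α : Type*} {R : α → α → Prop} (hR : ∀ a b, R a b → R b a)
    (f : ℕ → α) {lo hi : ℕ} (h : ∀ i, lo ≤ i → i < hi → R (f i) (f (i + 1))) {x y : ℕ}
    (hx : lo ≤ x ∧ x ≤ hi) (hy : lo ≤ y ∧ y ≤ hi) : Relation.ReflTransGen R (f x) (f y) := by
  refine Relation.ReflTransGen.lift f (fun _ _ => id) x y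
    (reflTransGen_of_succ (Function.onFun R f) (fun i hi' => ?_) (fun i hi' => ?_))
  all_goals
    rw [Set.mem_Ico] at hi'
    rw [Order.succ_eq_add_one]
  · exact h i (by omega) (by omega)
  · exact hR _ _ (h i (by omega) (by omega))

section Rows

variable {n k m : ℕ}

theorem proj_add (p q : ℤ × ℤ) : proj n (p + q) = proj n p + proj n q := by
  ext <;> simp [proj]

@[simp] theorem proj_zero : proj n 0 = 0 := by
  ext <;> simp [proj]

theorem eq_of_intCast_eq {a b : ℤ} (h : (a : ZMod n) = b) (hab : (b - a).natAbs < n) : a = b := by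
  rw [ZMod.intCast_eq_intCast_iff_dvd_sub] at h
  have := Int.eq_zero_of_abs_lt_dvd h (by rw [Int.abs_eq_natAbs]; exact_mod_cast hab)
  omega

theorem ncard_nbrSet_LAdj_le (v : Torus n) : (nbrSet (LAdj n k) v).ncard ≤ 4 * k + 2 := by
  have hsub : nbrSet (LAdj n k) v ⊆
      (v + proj n ·) '' ↑(Finset.Icc (-(k : ℤ)) k ×ˢ ({1, -1} : Finset ℤ)) := by
    rintro _ ⟨a, b, ha, hb, rfl⟩
    exact ⟨(a, b), by simp only [Finset.coe_product, Set.mem_prod, Finset.mem_coe,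
      Finset.mem_Icc, Finset.mem_insert, Finset.mem_singleton]; omega, rfl⟩
  calc _ ≤ _ := Set.ncard_le_ncard hsub (Set.toFinite _)
    _ ≤ _ := Set.ncard_image_le (Finset.finite_toSet _)
    _ = 4 * k + 2 := by
      rw [Set.ncard_coe_finset, Finset.card_product, Int.card_Icc]
      rw [show ({1, -1} : Finset ℤ).card = 2 by decide]
      omega

def rowSegment (v : Torus n) (sx s lo hi : ℤ) : Set (Torus n) :=
  (fun a : ℤ => v + proj n (sx * a, s)) '' Set.Icc lo hi

variable {v : Torus n} {sx s lo hi : ℤ}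

theorem rowSegment_subset_nbrSet (hsx : sx = 1 ∨ sx = -1) (hs : s = 1 ∨ s = -1)
    (hlo : -(k : ℤ) ≤ lo) (hhi : hi ≤ k) : rowSegment v sx s lo hi ⊆ nbrSet (LAdj n k) v := by
  rintro _ ⟨a, ha, rfl⟩
  exact ⟨sx * a, s, by rcases hsx with rfl | rfl <;> grind, hs, rfl⟩

theorem injOn_rowSegment (hkn : 2 * k + 1 ≤ n) (hsx : sx = 1 ∨ sx = -1) :
    Set.InjOn (fun a : ℤ => v + proj n (sx * a, s)) (Set.Icc (-(k : ℤ)) k) := by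
  intro a ha a' ha' h
  have := eq_of_intCast_eq (congrArg Prod.fst (add_left_cancel h))
    (by simp only [Set.mem_Icc] at ha ha'; rcases hsx with rfl | rfl <;> omega)
  rcases hsx with rfl | rfl <;> omega

theorem ncard_rowSegment (hkn : 2 * k + 1 ≤ n) (hsx : sx = 1 ∨ sx = -1)
    (hlo : -(k : ℤ) ≤ lo) (hhi : hi ≤ k) :
    (rowSegment v sx s lo hi).ncard = (hi + 1 - lo).toNat := by
  rw [rowSegment, ((injOn_rowSegment hkn hsx).mono (Set.Icc_subset_Icc hlo hhi)).ncard_image,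
    ← Finset.coe_Icc, Set.ncard_coe_finset, Int.card_Icc]

theorem disjoint_rowSegment_neg (hk : 1 ≤ k) (hkn : 2 * k + 1 ≤ n) (hs : s = 1 ∨ s = -1)
    {sx' lo' hi' : ℤ} : Disjoint (rowSegment v sx s lo hi) (rowSegment v sx' (-s) lo' hi') := by
  rw [Set.disjoint_left]
  rintro _ ⟨a, -, rfl⟩ ⟨a', -, h⟩
  have := eq_of_intCast_eq (congrArg Prod.snd (add_left_cancel h))
    (by rcases hs with rfl | rfl <;> omega)
  rcases hs with rfl | rfl <;> omega

theorem disjoint_rowSegment_of_lt (hkn : 2 * k + 1 ≤ n) (hsx : sx = 1 ∨ sx = -1)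
    {lo' hi' : ℤ} (hlo : -(k : ℤ) ≤ lo) (hhi' : hi' ≤ k) (hlt : hi < lo') :
    Disjoint (rowSegment v sx s lo hi) (rowSegment v sx s lo' hi') := by
  rw [Set.disjoint_left]
  rintro _ ⟨a, ⟨ha₁, ha₂⟩, rfl⟩ ⟨a', ⟨ha₁', ha₂'⟩, h⟩
  have := injOn_rowSegment hkn hsx ⟨by omega, by omega⟩ ⟨by omega, by omega⟩ h
  omega

theorem MGood.two_mul_cdiv_le_ncard {A : Set (Torus n)} (hg : MGood n k m A v)
    (hsx : sx = 1 ∨ sx = -1) (hs : s = 1 ∨ s = -1) :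
    2 * cdiv k m ≤ (A ∩ rowSegment v sx s 1 k).ncard := by
  convert hg sx s hsx hs using 2
  ext u
  constructor
  · rintro ⟨hu, a, ⟨h₁, h₂⟩, rfl⟩
    exact ⟨hu, a, h₁, h₂, rfl⟩
  · rintro ⟨hu, a, h₁, h₂, rfl⟩
    exact ⟨hu, a, ⟨h₁, h₂⟩, rfl⟩

/-- Goodness of `v` supplies `2⌈k/m⌉` active neighbours at offsets `[1, k]` of row `-sy`, disjoint
from the two given segments. -/
theorem mem_majFinal_of_rowSegments (hk : 1 ≤ k) (hkn : 2 * k + 1 ≤ n) {r : ℤ}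
    {A : Set (Torus n)} {sy e₁ e₂ : ℤ} (hsx : sx = 1 ∨ sx = -1) (hsy : sy = 1 ∨ sy = -1)
    (he₁ : e₁ ≤ k) (he₂ : e₂ ≤ 0)
    (h₁ : rowSegment v sx sy (-k) e₁ ⊆ majFinal (LAdj n k) r A)
    (h₂ : rowSegment v sx (-sy) (-k) e₂ ⊆ majFinal (LAdj n k) r A)
    (hg : MGood n k m A v)
    (hcount : 4 * k + 2 + r ≤ 2 * ((e₁ + 1 + k).toNat + (e₂ + 1 + k).toNat + 2 * cdiv k m)) :
    v ∈ majFinal (LAdj n k) r A := by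
  have : NeZero n := ⟨by omega⟩
  have hsy' : -sy = 1 ∨ -sy = -1 := by omega
  have hG : A ∩ rowSegment v sx (-sy) 1 k ⊆ rowSegment v sx (-sy) 1 k := Set.inter_subset_right
  refine mem_majFinal_of_le_ncard _ r
    (S := rowSegment v sx sy (-k) e₁ ∪ (rowSegment v sx (-sy) (-k) e₂ ∪
      (A ∩ rowSegment v sx (-sy) 1 k))) ?_ ?_
  · refine Set.union_subset (Set.subset_inter (rowSegment_subset_nbrSet hsx hsy le_rfl he₁) h₁)
      (Set.union_subset
        (Set.subset_inter (rowSegment_subset_nbrSet hsx hsy' le_rfl (by omega)) h₂)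
        (Set.subset_inter (hG.trans (rowSegment_subset_nbrSet hsx hsy' (by omega) le_rfl))
          (Set.inter_subset_left.trans (subset_majFinal _ r A))))
  · rw [Set.ncard_union_eq (Set.disjoint_union_right.2 ⟨disjoint_rowSegment_neg hk hkn hsy,
        (disjoint_rowSegment_neg hk hkn hsy).mono_right hG⟩),
      Set.ncard_union_eq ((disjoint_rowSegment_of_lt hkn hsx le_rfl le_rfl
        (show e₂ < 1 by omega)).mono_right hG),
      ncard_rowSegment hkn hsx le_rfl he₁, ncard_rowSegment hkn hsx le_rfl (by omega)]
    have := ncard_nbrSet_LAdj_le (n := n) (k := k) v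
    have := hg.two_mul_cdiv_le_ncard hsx hsy'
    push_cast
    omega

end Rows

section CloudShape

variable {k m : ℕ}

theorem two_le_cdiv (hm : 1 ≤ m) (hmk : m < k) : 2 ≤ cdiv k m := by
  rw [cdiv, Nat.le_div_iff_mul_le (by omega)]
  omega

theorem cdiv_le (hm : 1 ≤ m) : cdiv k m ≤ k := by
  have := Nat.le_mul_of_pos_left k (show 0 < m by omega)
  rw [cdiv, Nat.div_le_iff_le_mul_add_pred (by omega)]
  omega

theorem le_mul_cdiv (hm : 1 ≤ m) : k ≤ m * cdiv k m := by
  have := Nat.div_add_mod (k + m - 1) m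
  have := Nat.mod_lt (k + m - 1) (show 0 < m by omega)
  rw [cdiv]
  omega

def xstep (k m i : ℕ) : ℕ := if i < m then cdiv k m * i else k

theorem xstep_succ_le (hm : 1 ≤ m) (i : ℕ) : xstep k m (i + 1) ≤ xstep k m i + cdiv k m := by
  have := le_mul_cdiv (k := k) hm
  unfold xstep
  split_ifs <;> nlinarith

variable (k m) {a b i : ℕ}

theorem xseq_eq_xseq_succ_add (hi : i ≤ m + a) :
    xseq k m a b i = xseq k m a b (i + 1) + xstep k m i := by
  unfold xseq xstep
  split_ifs with h₁ h₂ h₃ h₃ <;> try omega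
  · rw [show m + a + 1 - i = m + a + 1 - (i + 1) + 1 by omega]
    ring
  · obtain rfl : m = i + 1 := by omega
    rw [Nat.Ico_succ_singleton, show i + 1 + a + 1 - (i + 1) = a + 1 by omega]
    simp
  · rw [Finset.sum_eq_sum_Ico_succ_bot (by omega)]
    ring

theorem xseq_le_xseq {j : ℕ} (hij : i ≤ j) (hj : j ≤ m + a + 1) :
    xseq k m a b j ≤ xseq k m a b i := by
  induction j, hij using Nat.le_induction with
  | base => rfl
  | succ j hij ih =>
    have := xseq_eq_xseq_succ_add k m (b := b) (show j ≤ m + a by omega)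
    have := ih (by omega)
    omega

theorem xseq_top : xseq k m a b (m + a + 1) = b := by
  simp [xseq, if_pos (show m ≤ m + a + 1 by omega)]

theorem add_le_xseq (hi : i ≤ m + a) : b + k ≤ xseq k m a b i := by
  unfold xseq
  split_ifs
  · have := Nat.le_mul_of_pos_left k (show 0 < m + a + 1 - i by omega)
    omega
  · have := Nat.le_mul_of_pos_left k (show 0 < a + 1 by omega)
    omega

theorem xseq_add_right (d : ℕ) : xseq k m a (b + d) i = xseq k m a b i + d := by
  unfold xseq
  split_ifs <;> omega

theorem xseq_succ_left (hi : i ≤ m + a + 1) : xseq k m (a + 1) b i = xseq k m a b i + k := by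
  unfold xseq
  split_ifs
  · rw [show m + (a + 1) + 1 - i = m + a + 1 - i + 1 by omega]
    ring
  · ring

theorem Scloud_mono_right {b b' : ℕ} (h : b ≤ b') : Scloud k m a b ⊆ Scloud k m a b' := by
  rintro p ⟨hrow, hcol⟩
  refine ⟨hrow, hcol.trans ?_⟩
  obtain ⟨d, rfl⟩ := Nat.exists_eq_add_of_le h
  rw [xseq_add_right]
  omega

theorem natAbs_add_natAbs_le_of_mem_Scloud {p : ℤ × ℤ} (hp : p ∈ Scloud k m a b) :
    p.1.natAbs + p.2.natAbs ≤ xseq k m a b 0 + (m + a + 1) := by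
  have := xseq_le_xseq k m (b := b) (Nat.zero_le _) hp.1
  have := hp.1
  have := hp.2
  omega

theorem add_mem_Scloud {δ p : ℤ × ℤ} (hδ : δ.1.natAbs + δ.2.natAbs ≤ 1) (hp : p ∈ Scloud k m 0 0) :
    δ + p ∈ Scloud k m 1 (xseq k m 0 0 0 + 1) := by
  obtain ⟨hrow, hcol⟩ := hp
  have hrow' : (δ.2 + p.2).natAbs ≤ m + 1 + 1 := by omega
  have := xseq_le_xseq k m (a := 0) (b := 0) (Nat.zero_le _) hrow
  have := xseq_le_xseq k m (b := xseq k m 0 0 0 + 1) (Nat.zero_le _) hrow'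
  have := xseq_le_xseq k m (b := xseq k m 0 0 0 + 1) hrow' le_rfl
  rw [xseq_top] at this
  exact ⟨hrow', by change (δ.1 + p.1).natAbs ≤ xseq k m 1 _ (δ.2 + p.2).natAbs; omega⟩

end CloudShape

def translate (n : ℕ) (w : Torus n) (S : Set (ℤ × ℤ)) : Set (Torus n) :=
  (w + proj n ·) '' S

def GoodOn (n k m : ℕ) (A U : Set (Torus n)) : Prop :=
  ∀ v ∈ U, MGood n k m A v ∨ v ∈ A

section CloudGrowth

variable {n k m a b : ℕ} {r : ℤ} {A : Set (Torus n)} {w : Torus n}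

theorem mem_translate {S : Set (ℤ × ℤ)} {p : ℤ × ℤ} (hp : p ∈ S) :
    w + proj n p ∈ translate n w S :=
  ⟨p, hp, rfl⟩

theorem GoodOn.mono {U U' : Set (Torus n)} (hU : GoodOn n k m A U') (h : U ⊆ U') :
    GoodOn n k m A U :=
  fun v hv => hU v (h hv)

theorem rowSegment_eq_empty {v : Torus n} {sx s lo hi : ℤ} (h : hi < lo) :
    rowSegment v sx s lo hi = ∅ :=
  Set.image_eq_empty.2 (Set.Icc_eq_empty_of_lt h)

theorem rowSegment_subset_of_translate_Scloud {E : Set (Torus n)}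
    (hcloud : translate n w (Scloud k m a b) ⊆ E) {p : ℤ × ℤ} {sx s lo hi : ℤ}
    (hrow : (p.2 + s).natAbs ≤ m + a + 1)
    (hcol : ∀ a' ∈ Set.Icc lo hi, (p.1 + sx * a').natAbs ≤ xseq k m a b (p.2 + s).natAbs) :
    rowSegment (w + proj n p) sx s lo hi ⊆ E := by
  rintro _ ⟨a', ha', rfl⟩
  dsimp only
  rw [add_assoc, ← proj_add]
  exact hcloud (mem_translate ⟨hrow, hcol a' ha'⟩)

/-- Of the neighbours of `w + p`, at least `k + d₁` in row `i - 1` and `k - d₂` in row `i + 1` lie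
in the cloud, where `d₁ = x_{i-1} - x_i` and `d₂ = x_i - x_{i+1} ≤ d₁ + ⌈k/m⌉`; goodness adds
`2⌈k/m⌉` more, which suffices as `r ≤ ⌈k/m⌉` and `2 ≤ ⌈k/m⌉`. -/
theorem mem_majFinal_of_Scloud_boundary (hm : 1 ≤ m) (hmk : m < k) (hkn : 2 * k + 1 ≤ n)
    (hr : r ≤ cdiv k m) (hcloud : translate n w (Scloud k m a b) ⊆ majFinal (LAdj n k) r A)
    {p : ℤ × ℤ} (hrow : p.2.natAbs ≤ m + a + 1)
    (hcol : p.1.natAbs = xseq k m a b p.2.natAbs + 1) (hg : MGood n k m A (w + proj n p)) :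
    w + proj n p ∈ majFinal (LAdj n k) r A := by
  have hk : 1 ≤ k := by omega
  have hc := two_le_cdiv hm hmk
  set i := p.2.natAbs
  set X := xseq k m a b i with hXdef
  obtain ⟨sx, hsx, hp₁⟩ : ∃ sx : ℤ, (sx = 1 ∨ sx = -1) ∧ p.1 = sx * (X + 1) := by
    rcases le_or_gt 0 p.1 with h | h
    · exact ⟨1, Or.inl rfl, by omega⟩
    · exact ⟨-1, Or.inr rfl, by omega⟩
  obtain ⟨sy, hsy, hin, hout⟩ : ∃ sy : ℤ, (sy = 1 ∨ sy = -1) ∧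
      (p.2 + sy).natAbs = (if i = 0 then 1 else i - 1) ∧ (p.2 + -sy).natAbs = i + 1 := by
    rcases le_or_gt p.2 0 with h | h
    · exact ⟨1, Or.inl rfl, by split_ifs <;> omega, by omega⟩
    · exact ⟨-1, Or.inr rfl, by split_ifs <;> omega, by omega⟩
  set X₁ := xseq k m a b (p.2 + sy).natAbs with hX₁def
  have hX₁ : k ≤ X₁ := le_add_self.trans (add_le_xseq k m (by split_ifs at hin <;> omega))
  have inner : rowSegment (w + proj n p) sx sy (-k) (min k (X₁ - X - 1)) ⊆
      majFinal (LAdj n k) r A :=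
    rowSegment_subset_of_translate_Scloud hcloud (by split_ifs at hin <;> omega)
      fun a' ⟨h₁, h₂⟩ => by rcases hsx with rfl | rfl <;> omega
  rcases lt_or_ge (m + a) i with htop | hmid
  · have hX : X = b := by rw [hXdef, show i = m + a + 1 by omega, xseq_top]
    have hX₁b : X₁ = b + k := by
      have := xseq_eq_xseq_succ_add k m (b := b) (le_refl (m + a))
      rw [xseq_top, xstep, if_neg (by omega)] at this
      rw [hX₁def, show (p.2 + sy).natAbs = m + a by split_ifs at hin <;> omega, this]
    refine mem_majFinal_of_rowSegments hk hkn hsx hsy (min_le_left _ _) (e₂ := -k - 1)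
      (by omega) inner (by rw [rowSegment_eq_empty (by omega)]; exact Set.empty_subset _) hg ?_
    omega
  · set X₂ := xseq k m a b (i + 1) with hX₂def
    have hX : k ≤ X := le_add_self.trans (add_le_xseq k m hmid)
    have hdrop : X = X₂ + xstep k m i := xseq_eq_xseq_succ_add k m hmid
    have hgain : X ≤ X₁ ∧ X - X₂ ≤ X₁ - X + cdiv k m := by
      rcases Nat.eq_zero_or_pos i with h0 | hpos
      · have : xstep k m i = 0 := by rw [h0, xstep, if_pos (by omega), mul_zero]
        have : X₁ = X₂ := by rw [hX₁def, hX₂def, hin, if_pos h0, h0]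
        omega
      · have hX₁X : X₁ = X + xstep k m (i - 1) := by
          rw [hX₁def, hXdef, hin, if_neg hpos.ne',
            xseq_eq_xseq_succ_add k m (show i - 1 ≤ m + a by omega), Nat.sub_add_cancel hpos]
        have := xstep_succ_le (k := k) hm (i - 1)
        rw [Nat.sub_add_cancel hpos] at this
        omega
    have outer : rowSegment (w + proj n p) sx (-sy) (-k) (X₂ - X - 1) ⊆
        majFinal (LAdj n k) r A :=
      rowSegment_subset_of_translate_Scloud hcloud (by omega)
        fun a' ⟨h₁, h₂⟩ => by rw [hout]; rcases hsx with rfl | rfl <;> omega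
    refine mem_majFinal_of_rowSegments hk hkn hsx hsy (min_le_left _ _) (by omega)
      inner outer hg ?_
    omega

theorem translate_Scloud_succ_subset_majFinal (hm : 1 ≤ m) (hmk : m < k) (hkn : 2 * k + 1 ≤ n)
    (hr : r ≤ cdiv k m) (hcloud : translate n w (Scloud k m a b) ⊆ majFinal (LAdj n k) r A)
    (hgood : GoodOn n k m A (translate n w (Scloud k m a (b + 1)))) :
    translate n w (Scloud k m a (b + 1)) ⊆ majFinal (LAdj n k) r A := by
  rintro _ ⟨p, hp, rfl⟩
  by_cases hold : p.1.natAbs ≤ xseq k m a b p.2.natAbs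
  · exact hcloud (mem_translate ⟨hp.1, hold⟩)
  refine (hgood _ (mem_translate hp)).elim (fun hg => ?_) (subset_majFinal _ r A ·)
  have hcol := hp.2
  rw [xseq_add_right] at hcol
  exact mem_majFinal_of_Scloud_boundary hm hmk hkn hr hcloud hp.1 (by omega) hg

theorem translate_Scloud_subset_majFinal_of_le (hm : 1 ≤ m) (hmk : m < k)
    (hkn : 2 * k + 1 ≤ n) (hr : r ≤ cdiv k m) {b' : ℕ} (hb : b ≤ b')
    (hcloud : translate n w (Scloud k m a b) ⊆ majFinal (LAdj n k) r A)
    (hgood : GoodOn n k m A (translate n w (Scloud k m a b'))) :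
    translate n w (Scloud k m a b') ⊆ majFinal (LAdj n k) r A := by
  induction b', hb using Nat.le_induction with
  | base => exact hcloud
  | succ b' hb ih =>
    exact translate_Scloud_succ_subset_majFinal hm hmk hkn hr
      (ih (hgood.mono (Set.image_mono (Scloud_mono_right k m b'.le_succ)))) hgood

/-- The rows `|i| ≤ m + a + 1` of `S^k_m(a+1,b)` and `S^k_m(a,b+k)` agree, and each vertex of a
new top row `±(m + a + 2)` sees its whole inner row of `S^k_m(a,b+k)`. -/
theorem translate_Scloud_raise_subset_majFinal (hm : 1 ≤ m) (hmk : m < k) (hkn : 2 * k + 1 ≤ n)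
    (hr : r ≤ cdiv k m) (hcloud : translate n w (Scloud k m a (b + k)) ⊆ majFinal (LAdj n k) r A)
    (hgood : GoodOn n k m A (translate n w (Scloud k m (a + 1) b))) :
    translate n w (Scloud k m (a + 1) b) ⊆ majFinal (LAdj n k) r A := by
  have hk : 1 ≤ k := by omega
  have hc := two_le_cdiv hm hmk
  rintro _ ⟨p, ⟨hrow, hcol⟩, rfl⟩
  rcases le_or_gt p.2.natAbs (m + a + 1) with hlow | htop
  · rw [xseq_succ_left k m hlow, ← xseq_add_right] at hcol
    exact hcloud (mem_translate ⟨hlow, hcol⟩)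
  refine (hgood _ (mem_translate ⟨hrow, hcol⟩)).elim (fun hg => ?_) (subset_majFinal _ r A ·)
  rw [show p.2.natAbs = m + (a + 1) + 1 by omega, xseq_top] at hcol
  obtain ⟨sy, hsy, hin⟩ : ∃ sy : ℤ, (sy = 1 ∨ sy = -1) ∧ (p.2 + sy).natAbs = m + a + 1 := by
    rcases le_or_gt p.2 0 with h | h
    · exact ⟨1, Or.inl rfl, by omega⟩
    · exact ⟨-1, Or.inr rfl, by omega⟩
  have inner : rowSegment (w + proj n p) 1 sy (-k) k ⊆ majFinal (LAdj n k) r A :=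
    rowSegment_subset_of_translate_Scloud hcloud hin.le
      fun a' ⟨h₁, h₂⟩ => by rw [hin, xseq_top]; omega
  refine mem_majFinal_of_rowSegments hk hkn (Or.inl rfl) hsy le_rfl (e₂ := -k - 1) (by omega)
    inner (by rw [rowSegment_eq_empty (by omega)]; exact Set.empty_subset _) hg ?_
  omega

theorem xseq_zero_add_le (hm : 1 ≤ m) (hmk : m < k) :
    xseq k m 0 (xseq k m 0 0 0 + 1 + k) 0 + (m + 2) ≤ 32 * m * k ^ 2 := by
  have hsum : ∑ j ∈ Finset.Ico 0 m, j ≤ m * m :=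
    (Finset.sum_le_card_nsmul _ _ m fun j hj => (Finset.mem_Ico.1 hj).2.le).trans (by simp)
  have hcs : cdiv k m * ∑ j ∈ Finset.Ico 0 m, j ≤ m * k ^ 2 :=
    calc _ ≤ k * (m * m) := Nat.mul_le_mul (cdiv_le hm) hsum
      _ ≤ k * (m * k) := by gcongr
      _ = m * k ^ 2 := by ring
  simp only [xseq, if_neg (show ¬m ≤ 0 by omega)]
  nlinarith

theorem translate_Scloud_one_subset_majFinal (hm : 1 ≤ m) (hmk : m < k) (hkn : 2 * k + 1 ≤ n)
    (hr : r ≤ cdiv k m) (hcloud : translate n w (Scloud k m 0 0) ⊆ majFinal (LAdj n k) r A)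
    (hgood : GoodOn n k m A
      (translate n w {p | p.1.natAbs + p.2.natAbs ≤ 32 * m * k ^ 2})) :
    translate n w (Scloud k m 1 (xseq k m 0 0 0 + 1)) ⊆ majFinal (LAdj n k) r A := by
  have hrad := xseq_zero_add_le hm hmk
  have hwide : xseq k m 1 (xseq k m 0 0 0 + 1) 0 = xseq k m 0 (xseq k m 0 0 0 + 1 + k) 0 := by
    rw [xseq_succ_left k m (Nat.zero_le _)]
    exact (xseq_add_right k m k).symm
  refine translate_Scloud_raise_subset_majFinal hm hmk hkn hr
    (translate_Scloud_subset_majFinal_of_le hm hmk hkn hr (Nat.zero_le _) hcloud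
      (hgood.mono (Set.image_mono fun p hp => ?_)))
    (hgood.mono (Set.image_mono fun p hp => ?_))
  all_goals
    have := natAbs_add_natAbs_le_of_mem_Scloud k m hp
    simp only [Set.mem_ofPred_eq, zero_add] at this ⊢
    omega

end CloudGrowth

section Lattice

variable {n : ℕ}

theorem l1Adj_add_proj (u : Torus n) {δ : ℤ × ℤ} (hδ : δ.1.natAbs + δ.2.natAbs = 1) :
    l1Adj n u (u + proj n δ) := by
  obtain ⟨x, y⟩ := δ
  have : (x = 1 ∧ y = 0) ∨ (x = -1 ∧ y = 0) ∨ (x = 0 ∧ y = 1) ∨ (x = 0 ∧ y = -1) := by omega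
  rcases this with ⟨rfl, rfl⟩ | ⟨rfl, rfl⟩ | ⟨rfl, rfl⟩ | ⟨rfl, rfl⟩ <;>
    simp [l1Adj, proj, sub_eq_add_neg]

theorem exists_eq_add_proj_of_l1Adj {u v : Torus n} (h : l1Adj n u v) :
    ∃ δ : ℤ × ℤ, δ.1.natAbs + δ.2.natAbs = 1 ∧ v = u + proj n δ := by
  rcases h with ⟨h₁, h₂ | h₂⟩ | ⟨h₂, h₁ | h₁⟩
  · exact ⟨(0, 1), rfl, Prod.ext (by simp [proj, h₁]) (by simp [proj, h₂])⟩
  · exact ⟨(0, -1), rfl, Prod.ext (by simp [proj, h₁]) (by simp [proj, h₂, sub_eq_add_neg])⟩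
  · exact ⟨(1, 0), rfl, Prod.ext (by simp [proj, h₁]) (by simp [proj, h₂])⟩
  · exact ⟨(-1, 0), rfl, Prod.ext (by simp [proj, h₁, sub_eq_add_neg]) (by simp [proj, h₂])⟩

theorem stepsLe_add_proj (w : Torus n) {d : ℕ} {p : ℤ × ℤ} (hp : p.1.natAbs + p.2.natAbs ≤ d) :
    stepsLe (l1Adj n) d w (w + proj n p) := by
  induction d generalizing p with
  | zero =>
    obtain ⟨x, y⟩ := p
    obtain ⟨rfl, rfl⟩ : x = 0 ∧ y = 0 := by omega
    simp [stepsLe, proj]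
  | succ d ih =>
    by_cases hd : p.1.natAbs + p.2.natAbs ≤ d
    · exact Or.inl (ih hd)
    obtain ⟨δ, hδ, hpδ⟩ : ∃ δ : ℤ × ℤ, δ.1.natAbs + δ.2.natAbs = 1 ∧
        (p - δ).1.natAbs + (p - δ).2.natAbs ≤ d := by
      rcases lt_trichotomy p.1 0 with h | h | h
      · exact ⟨(-1, 0), rfl, by simp; omega⟩
      · rcases le_or_gt p.2 0 with h' | h'
        · exact ⟨(0, -1), rfl, by simp; omega⟩
        · exact ⟨(0, 1), rfl, by simp; omega⟩
      · exact ⟨(1, 0), rfl, by simp; omega⟩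
    refine Or.inr ⟨_, ih hpδ, ?_⟩
    simpa [add_assoc, ← proj_add] using l1Adj_add_proj (w + proj n (p - δ)) hδ

theorem CellGood.goodOn {t k m : ℕ} {A : Set (Torus n)} {c : Cell n t} {w : Torus n}
    (hc : CellGood n t k m A c) (hw : w ∈ cellSet n t c) :
    GoodOn n k m A (translate n w {p | p.1.natAbs + p.2.natAbs ≤ 32 * m * k ^ 2}) := by
  rintro _ ⟨p, hp, rfl⟩
  exact hc _ ⟨w, hw, stepsLe_add_proj w hp⟩

end Lattice

section CloudMotion

variable {n k m : ℕ} {r : ℤ} {A : Set (Torus n)}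

theorem translate_Scloud_subset_majFinal_of_l1Adj (hm : 1 ≤ m) (hmk : m < k)
    (hkn : 2 * k + 1 ≤ n) (hr : r ≤ cdiv k m) {w w' : Torus n}
    (hcloud : translate n w (Scloud k m 0 0) ⊆ majFinal (LAdj n k) r A)
    (hgood : GoodOn n k m A (translate n w {p | p.1.natAbs + p.2.natAbs ≤ 32 * m * k ^ 2}))
    (hadj : l1Adj n w w') :
    translate n w' (Scloud k m 0 0) ⊆ majFinal (LAdj n k) r A := by
  obtain ⟨δ, hδ, rfl⟩ := exists_eq_add_proj_of_l1Adj hadj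
  rintro _ ⟨p, hp, rfl⟩
  dsimp only
  rw [add_assoc, ← proj_add]
  exact translate_Scloud_one_subset_majFinal hm hmk hkn hr hcloud hgood
    (mem_translate (add_mem_Scloud k m hδ.le hp))

theorem translate_Scloud_subset_majFinal_of_reflTransGen (hm : 1 ≤ m) (hmk : m < k)
    (hkn : 2 * k + 1 ≤ n) (hr : r ≤ cdiv k m) {t : ℕ} {Z : Set (Cell n t)}
    (hgood : ∀ c ∈ Z, CellGood n t k m A c) {w w' : Torus n}
    (hpath : Relation.ReflTransGen
      (fun x y => x ∈ ⋃ c ∈ Z, cellSet n t c ∧ y ∈ ⋃ c ∈ Z, cellSet n t c ∧ l1Adj n x y) w w')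
    (hcloud : translate n w (Scloud k m 0 0) ⊆ majFinal (LAdj n k) r A) :
    translate n w' (Scloud k m 0 0) ⊆ majFinal (LAdj n k) r A := by
  induction hpath with
  | refl => exact hcloud
  | tail _ hxy ih =>
    obtain ⟨hx, -, hadj⟩ := hxy
    obtain ⟨c, hc, hxc⟩ := Set.mem_iUnion₂.1 hx
    exact translate_Scloud_subset_majFinal_of_l1Adj hm hmk hkn hr ih
      ((hgood c hc).goodOn hxc) hadj

end CloudMotion

section Tessellation

variable {n t : ℕ}

theorem l1Adj_comm {u v : Torus n} : l1Adj n u v ↔ l1Adj n v u := by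
  unfold l1Adj
  constructor <;> rintro (⟨h₁, h₂ | h₂⟩ | ⟨h₁, h₂ | h₂⟩) <;> simp [h₁, h₂]

theorem l1Adj_swap {u v : Torus n} : l1Adj n u.swap v.swap ↔ l1Adj n u v :=
  or_comm

theorem swap_mem_cellSet_swap {c : Cell n t} {v : Torus n} (hv : v ∈ cellSet n t c) :
    v.swap ∈ cellSet n t c.swap := by
  obtain ⟨x, y, h₁, h₂, h₃, h₄, rfl⟩ := hv
  exact ⟨y, x, h₃, h₄, h₁, h₂, rfl⟩

theorem lt_cellEnd_succ {i : ℕ} (hi : i < n / t) : i * t < cellEnd n t (i + 1) := by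
  have : 0 < t := Nat.pos_of_ne_zero fun ht => by simp [ht] at hi
  have := Nat.div_mul_le_self n t
  have : (i + 1) * t ≤ n / t * t := Nat.mul_le_mul_right t hi
  unfold cellEnd
  split_ifs <;> nlinarith

theorem connIn_cellSet (c : Cell n t) : ConnIn (l1Adj n) (cellSet n t c) := by
  rintro _ ⟨x, y, hx₁, hx₂, hy₁, hy₂, rfl⟩ _ ⟨x', y', hx₁', hx₂', hy₁', hy₂', rfl⟩
  have hR : ∀ a b, a ∈ cellSet n t c ∧ b ∈ cellSet n t c ∧ l1Adj n a b →
      b ∈ cellSet n t c ∧ a ∈ cellSet n t c ∧ l1Adj n b a :=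
    fun a b h => ⟨h.2.1, h.1, l1Adj_comm.1 h.2.2⟩
  have horiz := reflTransGen_of_chain hR (fun i : ℕ => ((i : ZMod n), (y : ZMod n)))
    (fun i h₁ h₂ => ⟨⟨i, y, h₁, h₂.le, hy₁, hy₂, rfl⟩, ⟨i + 1, y, by omega, h₂, hy₁, hy₂, rfl⟩,
      Or.inr ⟨rfl, Or.inl (Nat.cast_succ i)⟩⟩) ⟨hx₁, hx₂⟩ ⟨hx₁', hx₂'⟩
  have vert := reflTransGen_of_chain hR (fun i : ℕ => ((x' : ZMod n), (i : ZMod n)))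
    (fun i h₁ h₂ => ⟨⟨x', i, hx₁', hx₂', h₁, h₂.le, rfl⟩,
      ⟨x', i + 1, hx₁', hx₂', by omega, h₂, rfl⟩, Or.inl ⟨rfl, Or.inl (Nat.cast_succ i)⟩⟩) ⟨hy₁, hy₂⟩ ⟨hy₁', hy₂'⟩
  exact horiz.trans vert

/-- The tessellation wraps around: `a_{⌊n/t⌋} = n ≡ 0 = a_0` in `ZMod n`. -/
theorem natCast_cellEnd_succ {i : ℕ} (hi : i < n / t) :
    ((cellEnd n t (i + 1) : ℕ) : ZMod n) = (((i + 1) % (n / t) * t : ℕ) : ZMod n) := by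
  unfold cellEnd
  split_ifs with h
  · rw [h, Nat.mod_self, zero_mul, Nat.cast_zero, ZMod.natCast_self]
  · rw [Nat.mod_eq_of_lt (by omega)]

theorem exists_l1Adj_of_fst_eq_add_one (ht : 1 ≤ t) (htn : t ≤ n) {c c' : Cell n t}
    (h₁ : c'.1 = c.1 + 1) (h₂ : c.2 = c'.2) :
    ∃ u ∈ cellSet n t c, ∃ v ∈ cellSet n t c', l1Adj n u v := by
  have : NeZero (n / t) := ⟨(Nat.div_pos htn (by omega)).ne'⟩
  have hc₁ := lt_cellEnd_succ (ZMod.val_lt c.1)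
  have hc₁' := lt_cellEnd_succ (ZMod.val_lt c'.1)
  have hc₂ := lt_cellEnd_succ (ZMod.val_lt c.2)
  have hval : c'.1.val = (c.1.val + 1) % (n / t) := by
    rw [h₁, ZMod.val_add, ZMod.val_one_eq_one_mod, Nat.add_mod_mod]
  refine ⟨((cellEnd n t (c.1.val + 1) : ℕ), ((c.2.val * t + 1 : ℕ) : ZMod n)),
    ⟨_, _, hc₁, le_rfl, le_rfl, hc₂, rfl⟩,
    ((c'.1.val * t + 1 : ℕ), ((c.2.val * t + 1 : ℕ) : ZMod n)),
    ⟨_, _, le_rfl, hc₁', by rw [← h₂], by rw [← h₂]; exact hc₂, rfl⟩, Or.inr ⟨rfl, Or.inl ?_⟩⟩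
  rw [natCast_cellEnd_succ (ZMod.val_lt c.1), hval]
  push_cast
  ring

theorem exists_l1Adj_of_l1Adj (ht : 1 ≤ t) (htn : t ≤ n) {c c' : Cell n t}
    (h : l1Adj (n / t) c c') : ∃ u ∈ cellSet n t c, ∃ v ∈ cellSet n t c', l1Adj n u v := by
  have snd_case : ∀ {c c' : Cell n t}, c'.2 = c.2 + 1 → c.1 = c'.1 →
      ∃ u ∈ cellSet n t c, ∃ v ∈ cellSet n t c', l1Adj n u v := fun {c c'} h₁ h₂ => by
    obtain ⟨u, hu, v, hv, huv⟩ :=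
      exists_l1Adj_of_fst_eq_add_one ht htn (c := c.swap) (c' := c'.swap) h₁ h₂
    exact ⟨u.swap, swap_mem_cellSet_swap hu, v.swap, swap_mem_cellSet_swap hv,
      l1Adj_swap.2 huv⟩
  have flip : ∀ {c c' : Cell n t}, (∃ u ∈ cellSet n t c', ∃ v ∈ cellSet n t c, l1Adj n u v) →
      ∃ u ∈ cellSet n t c, ∃ v ∈ cellSet n t c', l1Adj n u v :=
    fun ⟨u, hu, v, hv, huv⟩ => ⟨v, hv, u, hu, l1Adj_comm.1 huv⟩
  rcases h with ⟨h₂, h₁ | h₁⟩ | ⟨h₂, h₁ | h₁⟩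
  · exact snd_case h₁ h₂
  · exact flip (snd_case (by rw [h₁]; ring) h₂.symm)
  · exact exists_l1Adj_of_fst_eq_add_one ht htn h₁ h₂
  · exact flip (exists_l1Adj_of_fst_eq_add_one ht htn (by rw [h₁]; ring) h₂.symm)

theorem connIn_biUnion_cellSet (ht : 1 ≤ t) (htn : t ≤ n) {Z : Set (Cell n t)}
    (hZ : ConnIn (l1Adj (n / t)) Z) : ConnIn (l1Adj n) (⋃ c ∈ Z, cellSet n t c) :=
  hZ.biUnion (fun c _ => connIn_cellSet c) fun _ _ => exists_l1Adj_of_l1Adj ht htn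

end Tessellation

end Maj

/-- Corollary 2.3 of the paper. If `Z` is an `ℓ₁`-connected set of `m`-good
cells of the `t`-tessellation containing a seed, then in the `r`-majority bootstrap
percolation process on `L(n,k)` all cells of `Z` eventually become active. -/
theorem statement_5 (n k m t : ℕ) (r : ℤ) (hm1 : 1 ≤ m) (hmk : m < k)
    (hr : r ≤ (cdiv k m : ℤ)) (ht1 : 1 ≤ t) (htn : t ≤ n) (hkn : 2 * k + 1 ≤ n)
    (A : Set (Torus n)) (Z : Set (Cell n t))
    (hconn : ConnIn (l1Adj (n / t)) Z)
    (hgood : ∀ c ∈ Z, CellGood n t k m A c)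
    (hseed : ∃ c ∈ Z, IsSeed n t k m A c) :
    ∀ c ∈ Z, cellSet n t c ⊆ majFinal (LAdj n k) r A := by
  intro c hc u hu
  obtain ⟨c₀, hc₀, w₀, hseed⟩ := hseed
  have h0 : (0 : ℤ × ℤ) ∈ Scloud k m 0 0 := ⟨by simp, by simp⟩
  have hw₀ : w₀ ∈ cellSet n t c₀ := by simpa using (hseed 0 h0).2
  have hcloud₀ : translate n w₀ (Scloud k m 0 0) ⊆ majFinal (LAdj n k) r A := by
    rintro _ ⟨p, hp, rfl⟩
    exact subset_majFinal _ r A (hseed p hp).1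
  have hpath := connIn_biUnion_cellSet ht1 htn hconn w₀ (Set.mem_biUnion hc₀ hw₀) u
    (Set.mem_biUnion hc hu)
  simpa using translate_Scloud_subset_majFinal_of_reflTransGen hm1 hmk hkn hr hgood hpath hcloud₀
    (mem_translate h0)
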